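/- arXiv:2409.09634 — 3 statements merged into one kernel-verified Lean document; each statement's English description precedes it below -/
import Mathlib

section
/- Let G be a finite oriented multigraph and A a finite abelian group, and let b : V(G) → A be a locally zero-sum function (the restriction of b to each connected component sums to 0). Then the number of (A,b)-flows of G (functions f : E(G) → A with ∂f = b) equals |A|^{m(G)}, where m(G) = |E(G)| − |V(G)| + c(G) and c(G) is the number of connected components. -/
/-!
The boundary map `∂ : (E → A) →+ (V → A)` is a homomorphism, so the `(A,b)`-flows form a coset
of the flow group `ker ∂` as soon as `b` is a boundary. The image of `∂` is exactly the group of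
locally zero-sum functions: `δᵤ a - δᵥ a` is a boundary whenever `u` and `v` are joined by a walk,
and a locally zero-sum `b` equals `∑ᵤ (δᵤ (b u) - δ_{r u} (b u))` for any choice `r u` of a
representative of the component of `u`. Summing over components maps `A^V` onto `A^c` with this
kernel, so `|im ∂| = |A|^(|V| - c)` and `|ker ∂| = |A|^|E| / |im ∂| = |A|^(|E| - |V| + c)`.
-/

open Finset

attribute [local instance] Classical.propDecidable

universe u v w

/-- Adjacency through a present edge in the spanning subgraph with edge predicate `ok`. -/
def edgeRel {V E : Type*} (head tail : E → V) (ok : E → Prop) (u v : V) : Prop :=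
  ∃ e, ok e ∧ ((head e = u ∧ tail e = v) ∨ (head e = v ∧ tail e = u))

/-- Reachability (same connected component) in the spanning subgraph. -/
def Reach {V E : Type*} (head tail : E → V) (ok : E → Prop) : V → V → Prop :=
  Relation.EqvGen (edgeRel head tail ok)

/-- Number of connected components of the spanning subgraph. -/
noncomputable def ncomp {V E : Type*} (head tail : E → V) (ok : E → Prop) : ℕ :=
  Nat.card (Quotient (Relation.EqvGen.setoid (edgeRel head tail ok)))

/-- Boundary of an edge-valued function, via the orientation `head`/`tail`. -/
noncomputable def bdry {V E A : Type*} [Fintype E] [AddCommGroup A]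
    (head tail : E → V) (f : E → A) (v : V) : A :=
  ∑ e : E, ((if head e = v then f e else 0) - (if tail e = v then f e else 0))

/-- Boundary of an edge-valued function on the spanning subgraph with edges `ok`. -/
noncomputable def bdrySub {V E A : Type*} [Fintype E] [AddCommGroup A]
    (head tail : E → V) (ok : E → Prop) (f : {e : E // ok e} → A) (v : V) : A :=
  ∑ e : {e : E // ok e}, ((if head e.1 = v then f e else 0) - (if tail e.1 = v then f e else 0))

/-- `b` sums to zero over every connected component of the spanning subgraph
(`b`-compatibility / locally zero-sum). -/
def Compatible {V E A : Type*} [Fintype V] [AddCommGroup A]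
    (head tail : E → V) (ok : E → Prop) (b : V → A) : Prop :=
  ∀ v : V, (∑ u : V, if Reach head tail ok u v then b u else 0) = 0

/-- A bond: a minimal nonempty edge set whose deletion changes the number of components,
equivalently a minimal nonempty edge cut. -/
def IsBond {V E : Type*} (head tail : E → V) (F : Finset E) : Prop :=
  F.Nonempty ∧ ncomp head tail (fun e => e ∉ F) ≠ ncomp head tail (fun _ => True) ∧
    ∀ F' : Finset E, F' ⊂ F → ncomp head tail (fun e => e ∉ F') = ncomp head tail (fun _ => True)

/-- Cycle rank `m(G-S) = |E(G-S)| - |V| + c(G-S)` of the spanning subgraph `G-S`. -/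
noncomputable def cycRank {V E : Type*} [Fintype V] [Fintype E]
    (head tail : E → V) (S : Finset E) : ℕ :=
  (Fintype.card E - S.card) + ncomp head tail (fun e => e ∉ S) - Fintype.card V

/-- A `b`-compatible bond. -/
def IsCBond {V E A : Type*} [Fintype V] [AddCommGroup A]
    (head tail : E → V) (b : V → A) (F : Finset E) : Prop :=
  IsBond head tail F ∧ Compatible head tail (fun e => e ∉ F) b

/-- A `b`-compatible broken bond w.r.t. the total order `lo` on edges. -/
def IsCBrokenBond {V E A : Type*} [Fintype V] [AddCommGroup A]
    (head tail : E → V) (lo : LinearOrder E) (b : V → A) (B : Finset E) : Prop :=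
  ∃ F : Finset E, IsCBond head tail b F ∧
    ∃ hne : F.Nonempty, B = F.erase (@Finset.max' E lo F hne)

/-- The signless coefficient `a_i(G,b)`: the number of `i`-edge subsets `S` with `G-S`
`b`-compatible and `S` containing no `b`-compatible broken bond. -/
noncomputable def aCoeff {V E A : Type*} [Fintype V] [Fintype E] [AddCommGroup A]
    (head tail : E → V) (lo : LinearOrder E) (b : V → A) (i : ℕ) : ℕ :=
  Nat.card {S : Finset E // S.card = i ∧ Compatible head tail (fun e => e ∉ S) b ∧
    ∀ B : Finset E, IsCBrokenBond head tail lo b B → ¬ B ⊆ S}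

/-- Adjacency inside the induced subgraph on the vertex set `X`. -/
def edgeRelIn {V E : Type*} (head tail : E → V) (X : Set V) (u v : V) : Prop :=
  ∃ e, head e ∈ X ∧ tail e ∈ X ∧ ((head e = u ∧ tail e = v) ∨ (head e = v ∧ tail e = u))

/-- Reachability within the induced subgraph on `X`. -/
def ReachIn {V E : Type*} (head tail : E → V) (X : Set V) : V → V → Prop :=
  Relation.EqvGen (edgeRelIn head tail X)

def setoidOn {V E : Type*} (head tail : E → V) (X : Set V) : Setoid {v : V // v ∈ X} :=
  ⟨fun a b => ReachIn head tail X a.1 b.1,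
   ⟨fun a => Relation.EqvGen.refl a.1, fun h => Relation.EqvGen.symm _ _ h, fun h h' => Relation.EqvGen.trans _ _ _ h h'⟩⟩

/-- Number of connected components of the induced subgraph on `X`. -/
noncomputable def ncompOn {V E : Type*} (head tail : E → V) (X : Set V) : ℕ :=
  Nat.card (Quotient (setoidOn head tail X))

/-- `X ∈ Λ(G)`: `X` nonempty, `G[X]` connected and `c(G-X) = c(G)`. -/
def InLambda {V E : Type*} [Fintype V] (head tail : E → V) (X : Finset V) : Prop :=
  X.Nonempty ∧ (∀ u ∈ X, ∀ v ∈ X, ReachIn head tail (↑X) u v) ∧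
    ncompOn head tail ((↑X : Set V)ᶜ) = ncomp head tail (fun _ => True)

lemma AddMonoidHom.card_ker_mul_card_range {G H : Type*} [AddGroup G] [AddGroup H] (φ : G →+ H) :
    Nat.card φ.ker * Nat.card φ.range = Nat.card G := by
  rw [← AddSubgroup.index_ker, AddSubgroup.card_mul_index]

lemma AddMonoidHom.card_fiber_eq_card_ker {G H : Type*} [AddGroup G] [AddGroup H] (φ : G →+ H)
    {b : H} (hb : b ∈ φ.range) : Nat.card {g // φ g = b} = Nat.card φ.ker := by
  obtain ⟨g₀, rfl⟩ := hb
  exact Nat.card_congr ((Equiv.subtypeEquivRight fun g => Set.mem_singleton_iff.symm).trans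
    (φ.fiberEquivKer g₀))

lemma Nat.eq_pow_sub_of_mul_pow_eq {k a m n : ℕ} (ha : 0 < a) (h : k * a ^ m = a ^ n) :
    k = a ^ (n - m) := by
  obtain rfl | ha1 := (Nat.one_le_iff_ne_zero.2 ha.ne').eq_or_lt
  · simpa using h
  have hmn : m ≤ n := (Nat.pow_dvd_pow_iff_le_right ha1).1 (Dvd.intro_left k h)
  rw [← Nat.pow_sub_mul_pow a hmn] at h
  exact Nat.eq_of_mul_eq_mul_right (pow_pos ha m) h

section FiberSum

variable {V Q W A : Type*} [Fintype V]

noncomputable def fiberSum [DecidableEq Q] [AddCommMonoid A] (π : V → Q) : (V → A) →+ (Q → A) :=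
  ∑ u, (AddMonoidHom.single _ (π u)).comp (Pi.evalAddMonoidHom _ u)

lemma fiberSum_apply [DecidableEq Q] [AddCommMonoid A] (π : V → Q) (b : V → A) (q : Q) :
    fiberSum π b q = ∑ u, if π u = q then b u else 0 := by
  simp [fiberSum, Pi.single_apply, eq_comm]

lemma fiberSum_single [DecidableEq V] [DecidableEq Q] [AddCommMonoid A] (π : V → Q) (v : V)
    (a : A) : fiberSum π (Pi.single v a) = Pi.single (π v) a := by
  simp only [fiberSum, AddMonoidHom.finsetSum_apply, AddMonoidHom.comp_apply,
    Pi.evalAddMonoidHom_apply, AddMonoidHom.single_apply]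
  exact (Finset.sum_eq_single v (fun u _ hu => by simp [hu]) (by simp)).trans (by simp)

lemma fiberSum_id [DecidableEq V] [AddCommMonoid A] :
    fiberSum (A := A) (id : V → V) = AddMonoidHom.id _ :=
  AddMonoidHom.functions_ext _ _ _ fun v a => fiberSum_single id v a

lemma fiberSum_comp [DecidableEq V] [Fintype Q] [DecidableEq Q] [DecidableEq W] [AddCommMonoid A]
    (π : V → Q) (g : Q → W) : fiberSum (A := A) (g ∘ π) = (fiberSum g).comp (fiberSum π) :=
  AddMonoidHom.functions_ext _ _ _ fun v a => by
    simp only [AddMonoidHom.comp_apply, fiberSum_single, Function.comp_apply]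

lemma fiberSum_surjective [DecidableEq V] [Fintype Q] [DecidableEq Q] [AddCommMonoid A]
    {π : V → Q} (hπ : Function.Surjective π) : Function.Surjective (fiberSum (A := A) π) := by
  obtain ⟨s, hs⟩ := hπ.hasRightInverse
  intro φ
  refine ⟨fiberSum s φ, ?_⟩
  rw [← AddMonoidHom.comp_apply, ← fiberSum_comp, hs.comp_eq_id, fiberSum_id,
    AddMonoidHom.id_apply]

variable [DecidableEq V] [AddCommGroup A] {R : AddSubgroup (V → A)} {r : V → V → Prop}

omit [Fintype V] in
lemma single_sub_single_mem_of_eqvGen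
    (hr : ∀ u v a, r u v → Pi.single u a - Pi.single v a ∈ R) {u v : V}
    (huv : Relation.EqvGen r u v) (a : A) : Pi.single u a - Pi.single v a ∈ R := by
  induction huv with
  | rel u v h => exact hr u v a h
  | refl u => simp
  | symm u v _ ih => simpa using R.neg_mem ih
  | trans u v w _ _ ih ih' => simpa using R.add_mem ih ih'

lemma sub_fiberSum_mem (hr : ∀ u v a, r u v → Pi.single u a - Pi.single v a ∈ R)
    {g : V → V} (hg : ∀ u, Relation.EqvGen r u (g u)) (b : V → A) : b - fiberSum g b ∈ R := by
  rw [← Finset.univ_sum_single b, map_sum, ← Finset.sum_sub_distrib]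
  exact R.sum_mem fun u _ => by
    rw [fiberSum_single]
    exact single_sub_single_mem_of_eqvGen hr (hg u) (b u)

lemma mem_of_fiberSum_eq_zero [Fintype Q] [DecidableEq Q]
    (hr : ∀ u v a, r u v → Pi.single u a - Pi.single v a ∈ R) {π : V → Q} {s : Q → V}
    (hs : ∀ u, Relation.EqvGen r u (s (π u))) {b : V → A} (hb : fiberSum π b = 0) : b ∈ R := by
  have := sub_fiberSum_mem hr (g := s ∘ π) hs b
  rwa [fiberSum_comp, AddMonoidHom.comp_apply, hb, map_zero, sub_zero] at this

end FiberSum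

section Components

variable {V E : Type*} (head tail : E → V)

abbrev Component := Quotient (Relation.EqvGen.setoid (edgeRel head tail fun _ : E => True))

def toComponent : V → Component head tail := Quotient.mk _

lemma toComponent_eq_iff {u v : V} :
    toComponent head tail u = toComponent head tail v ↔ Reach head tail (fun _ => True) u v :=
  Quotient.eq

lemma toComponent_head (e : E) : toComponent head tail (head e) = toComponent head tail (tail e) :=
  Quotient.sound (.rel _ _ ⟨e, trivial, .inl ⟨rfl, rfl⟩⟩)

end Components

section Flows

variable {V E A : Type*} [Fintype E] [AddCommGroup A] (head tail : E → V)

noncomputable def bdryHom : (E → A) →+ (V → A) where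
  toFun := bdry head tail
  map_zero' := by ext; simp [bdry]
  map_add' f g := by
    ext v
    simp only [bdry, Pi.add_apply, ← Finset.sum_add_distrib]
    refine Finset.sum_congr rfl fun e _ => ?_
    split_ifs <;> abel

lemma bdryHom_apply (f : E → A) : bdryHom head tail f = bdry head tail f := rfl

lemma bdryHom_single (e : E) (a : A) :
    bdryHom head tail (Pi.single e a) = Pi.single (head e) a - Pi.single (tail e) a := by
  ext v
  simp only [bdryHom_apply, bdry, Pi.sub_apply]
  rw [Finset.sum_eq_single e (fun e' _ he' => by simp [he']) (by simp)]
  simp [Pi.single_apply, eq_comm]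

variable [Fintype V]

lemma fiberSum_comp_bdryHom :
    (fiberSum (A := A) (toComponent head tail)).comp (bdryHom head tail) = 0 :=
  AddMonoidHom.functions_ext _ _ _ fun e a => by
    rw [AddMonoidHom.comp_apply, bdryHom_single, map_sub, fiberSum_single, fiberSum_single,
      toComponent_head, sub_self, AddMonoidHom.zero_apply]

lemma range_bdryHom :
    (bdryHom (A := A) head tail).range = (fiberSum (toComponent head tail)).ker := by
  refine le_antisymm ?_ fun b hb => mem_of_fiberSum_eq_zero ?_ (s := Quotient.out)
    (fun u => .symm _ _ ((toComponent_eq_iff head tail).1 (Quotient.out_eq _))) hb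
  · rintro _ ⟨f, rfl⟩
    exact DFunLike.congr_fun (fiberSum_comp_bdryHom head tail) f
  · rintro u v a ⟨e, -, ⟨rfl, rfl⟩ | ⟨rfl, rfl⟩⟩
    · exact ⟨Pi.single e a, bdryHom_single head tail e a⟩
    · exact ⟨Pi.single e (-a), by rw [bdryHom_single, Pi.single_neg, Pi.single_neg, neg_sub_neg]⟩

lemma mem_range_bdryHom_of_compatible {b : V → A} (hb : Compatible head tail (fun _ => True) b) :
    b ∈ (bdryHom head tail).range := by
  rw [range_bdryHom, AddMonoidHom.mem_ker]
  funext q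
  induction q using Quotient.ind with
  | _ v =>
    rw [fiberSum_apply]
    exact (Finset.sum_congr rfl fun u _ => if_congr (toComponent_eq_iff head tail) rfl rfl).trans
      (hb v)

lemma card_range_bdryHom_mul [Fintype A] :
    Nat.card (bdryHom (A := A) head tail).range * Fintype.card A ^ ncomp head tail (fun _ => True) =
      Fintype.card A ^ Fintype.card V := by
  have hsurj : (fiberSum (A := A) (toComponent head tail)).range = ⊤ :=
    AddMonoidHom.range_eq_top.2 (fiberSum_surjective Quotient.mk_surjective)
  have := (fiberSum (A := A) (toComponent head tail)).card_ker_mul_card_range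
  rwa [hsurj, Nat.card_congr AddSubgroup.topEquiv.toEquiv, Nat.card_fun, Nat.card_fun,
    ← range_bdryHom, Nat.card_eq_fintype_card (α := A), Nat.card_eq_fintype_card (α := V)] at this

end Flows

/-- the number of `(A,b)`-flows is `|A|^{m(G)}` for locally zero-sum `b`. -/
theorem stmt1 {V E A : Type*} [Fintype V] [Fintype E] [AddCommGroup A] [Fintype A]
    (head tail : E → V) (b : V → A)
    (hb : Compatible head tail (fun _ => True) b) :
    Nat.card {f : E → A // bdry head tail f = b} =
      Fintype.card A ^ (Fintype.card E + ncomp head tail (fun _ => True) - Fintype.card V) := by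
  have hflows := (bdryHom (A := A) head tail).card_fiber_eq_card_ker
    (mem_range_bdryHom_of_compatible head tail hb)
  have hcycles := (bdryHom (A := A) head tail).card_ker_mul_card_range
  simp only [bdryHom_apply] at hflows
  rw [Nat.card_fun, Nat.card_eq_fintype_card (α := A), Nat.card_eq_fintype_card (α := E)] at hcycles
  rw [hflows]
  refine Nat.eq_pow_sub_of_mul_pow_eq Fintype.card_pos ?_
  rw [← card_range_bdryHom_mul head tail, ← mul_assoc, hcycles, pow_add]
end

section
/- Let G be a finite oriented multigraph, A a finite abelian group, and b : V(G) → A locally zero-sum. Then the number of nowhere-zero (A,b)-flows of G equals Σ_{S ⊆ E(G), G−S is b-compatible} (−1)^{|S|} · |A|^{m(G−S)}, where the sum is over edge subsets S such that the spanning subgraph G−S is b-compatible. -/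
open Finset

attribute [local instance] Classical.propDecidable

universe u v w

section FlowAux

variable {V E A : Type*} [Fintype V] [Fintype E] [AddCommGroup A]

/-- `bdrySub` as an additive monoid hom. -/
noncomputable def Dmap (head tail : E → V) (ok : E → Prop) :
    ({e : E // ok e} → A) →+ (V → A) where
  toFun f := bdrySub head tail ok f
  map_zero' := by funext v; simp [bdrySub]
  map_add' f g := by
    funext v
    simp only [bdrySub, Pi.add_apply]
    rw [← Finset.sum_add_distrib]
    refine Finset.sum_congr rfl fun e _ => ?_
    split_ifs <;> abel

@[simp] lemma Dmap_apply (head tail : E → V) (ok : E → Prop) (f : {e : E // ok e} → A) :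
    Dmap (A := A) head tail ok f = bdrySub head tail ok f := rfl

lemma compat_of_bdrySub (head tail : E → V) (ok : E → Prop) (g : {e : E // ok e} → A) :
    Compatible head tail ok (bdrySub head tail ok g) := by
  intro v
  have hedge : ∀ e : {e : E // ok e}, Reach head tail ok (head e.1) (tail e.1) :=
    fun e => Relation.EqvGen.rel _ _ ⟨e.1, e.2, Or.inl ⟨rfl, rfl⟩⟩
  have key : ∀ u ∈ Finset.univ, (if Reach head tail ok u v then bdrySub head tail ok g u else 0)
      = ∑ e : {e : E // ok e},
          ((if head e.1 = u then (if Reach head tail ok u v then g e else 0) else 0)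
            - (if tail e.1 = u then (if Reach head tail ok u v then g e else 0) else 0)) := by
    intro u _
    by_cases h : Reach head tail ok u v
    · simp only [if_pos h, bdrySub]
    · simp [if_neg h]
  rw [Finset.sum_congr rfl key, Finset.sum_comm]
  refine Finset.sum_eq_zero fun e _ => ?_
  rw [Finset.sum_sub_distrib, Finset.sum_ite_eq, Finset.sum_ite_eq]
  simp only [Finset.mem_univ, if_true]
  by_cases h : Reach head tail ok (head e.1) v
  · rw [if_pos h,
      if_pos (show Reach head tail ok (tail e.1) v from
        Relation.EqvGen.trans _ _ _ (Relation.EqvGen.symm _ _ (hedge e)) h), sub_self]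
  · rw [if_neg h, if_neg (show ¬ Reach head tail ok (tail e.1) v from
      fun h' => h (Relation.EqvGen.trans _ _ _ (hedge e) h')), sub_self]

lemma reach_mem_range (head tail : E → V) (ok : E → Prop) (a : A) :
    ∀ {u v : V}, Reach head tail ok u v →
      (fun w => (if u = w then a else 0) - (if v = w then a else 0)) ∈
        AddMonoidHom.range (Dmap (A := A) head tail ok) := by
  intro u v h
  induction h with
  | rel u v huv =>
      obtain ⟨e, oke, hor⟩ := huv
      have base : ∀ x y : V, head e = x → tail e = y →
          (fun w => (if x = w then a else 0) - (if y = w then a else 0)) ∈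
            AddMonoidHom.range (Dmap (A := A) head tail ok) := by
        intro x y hx hy
        refine AddMonoidHom.mem_range.2 ⟨fun e' => if e' = ⟨e, oke⟩ then a else 0, ?_⟩
        funext w
        show bdrySub head tail ok _ w = _
        rw [bdrySub, Finset.sum_eq_single (⟨e, oke⟩ : {e : E // ok e})]
        · simp [hx, hy]
        · intro e' _ hne
          simp [if_neg hne]
        · intro h; exact absurd (Finset.mem_univ _) h
      rcases hor with ⟨hx, hy⟩ | ⟨hx, hy⟩
      · exact base u v hx hy
      · have hmem := base v u hx hy
        have hneg : (fun w => (if u = w then a else 0) - (if v = w then a else 0))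
            = -(fun w => (if v = w then a else 0) - (if u = w then a else 0)) := by
          funext w; simp [neg_sub]
        rw [hneg]; exact neg_mem hmem
  | refl u =>
      have h0 : (fun w => (if u = w then a else 0) - (if u = w then a else 0)) = (0 : V → A) := by
        funext w; simp
      rw [h0]; exact zero_mem _
  | symm u v _ ih =>
      have hneg : (fun w => (if v = w then a else 0) - (if u = w then a else 0))
          = -(fun w => (if u = w then a else 0) - (if v = w then a else 0)) := by
        funext w; simp [neg_sub]
      rw [hneg]; exact neg_mem ih
  | trans u v w _ _ ih1 ih2 =>
      have hsum : (fun x => (if u = x then a else 0) - (if w = x then a else 0))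
          = (fun x => (if u = x then a else 0) - (if v = x then a else 0))
            + (fun x => (if v = x then a else 0) - (if w = x then a else 0)) := by
        funext x
        simp only [Pi.add_apply, sub_add_sub_cancel]
      rw [hsum]; exact add_mem ih1 ih2

lemma mem_range_of_compat (head tail : E → V) (ok : E → Prop) {b : V → A}
    (hb : Compatible head tail ok b) :
    b ∈ AddMonoidHom.range (Dmap (A := A) head tail ok) := by
  classical
  set rep : V → V := fun x =>
    (Quotient.mk (Relation.EqvGen.setoid (edgeRel head tail ok)) x).out with hrepdef
  have hrep1 : ∀ x, Reach head tail ok (rep x) x := by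
    intro x
    exact Quotient.exact
      (Quotient.out_eq (Quotient.mk (Relation.EqvGen.setoid (edgeRel head tail ok)) x))
  have hrep2 : ∀ {x y}, Reach head tail ok x y → rep x = rep y := by
    intro x y h
    simp only [hrepdef]
    rw [Quotient.sound h]
  have hrepidem : ∀ x, rep (rep x) = rep x := fun x => hrep2 (hrep1 x)
  have hz : (fun w => ∑ u : V, if rep u = w then b u else 0) = (0 : V → A) := by
    funext w
    by_cases hw : rep w = w
    · have hcongr : ∀ u ∈ Finset.univ, (if rep u = w then b u else 0)
          = (if Reach head tail ok u w then b u else 0) := by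
        intro u _
        refine if_congr ?_ rfl rfl
        constructor
        · intro h
          have := hrep1 u
          rw [h] at this
          exact Relation.EqvGen.symm _ _ this
        · intro h
          rw [hrep2 h, hw]
      rw [Finset.sum_congr rfl hcongr]
      exact hb w
    · refine Finset.sum_eq_zero fun u _ => ?_
      rw [if_neg]
      intro h
      have := hrepidem u
      rw [h] at this
      exact hw this
  have hdecomp : b = (∑ u : V, fun w => (if u = w then b u else 0)
        - (if rep u = w then b u else 0))
      + (fun w => ∑ u : V, if rep u = w then b u else 0) := by
    funext w
    simp only [Pi.add_apply, Finset.sum_apply]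
    rw [Finset.sum_sub_distrib]
    rw [sub_add_cancel]
    rw [Finset.sum_ite_eq']
    simp
  rw [hdecomp, hz, add_zero]
  refine sum_mem fun u _ => ?_
  exact reach_mem_range head tail ok (b u) (Relation.EqvGen.symm _ _ (hrep1 u))

lemma card_compat_mul [Fintype A] (head tail : E → V) (ok : E → Prop) :
    Nat.card {b : V → A // Compatible head tail ok b} * Fintype.card A ^ ncomp head tail ok
      = Fintype.card A ^ Fintype.card V := by
  classical
  set Q := Quotient (Relation.EqvGen.setoid (edgeRel head tail ok)) with hQ
  haveI : Finite Q := Quotient.finite _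
  set Φ : (V → A) →+ (Q → A) :=
    { toFun := fun b q => ∑ u : V,
        if Quotient.mk (Relation.EqvGen.setoid (edgeRel head tail ok)) u = q then b u else 0
      map_zero' := by funext q; simp
      map_add' := by
        intro f g; funext q
        simp only [Pi.add_apply]
        rw [← Finset.sum_add_distrib]
        exact Finset.sum_congr rfl fun u _ => by split_ifs <;> simp } with hΦ
  have hΦ_apply : ∀ (b : V → A) (q : Q), Φ b q = ∑ u : V,
      if Quotient.mk (Relation.EqvGen.setoid (edgeRel head tail ok)) u = q then b u else 0 :=
    fun b q => rfl
  have hiff : ∀ u v : V,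
      (Quotient.mk (Relation.EqvGen.setoid (edgeRel head tail ok)) u
        = Quotient.mk (Relation.EqvGen.setoid (edgeRel head tail ok)) v)
        ↔ Reach head tail ok u v :=
    fun u v => ⟨fun h => Quotient.exact h, fun h => Quotient.sound h⟩
  have hsurj : Function.Surjective Φ := by
    intro h
    refine ⟨fun u => if (Quotient.mk (Relation.EqvGen.setoid (edgeRel head tail ok)) u : Q).out = u
      then h (Quotient.mk _ u) else 0, ?_⟩
    funext q
    rw [hΦ_apply]
    rw [Finset.sum_eq_single q.out]
    · rw [if_pos (Quotient.out_eq q)]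
      rw [if_pos]
      · congr 1
        exact Quotient.out_eq q
      · rw [Quotient.out_eq q]
    · intro u _ hne
      by_cases h1 : (Quotient.mk (Relation.EqvGen.setoid (edgeRel head tail ok)) u : Q) = q
      · rw [if_pos h1, if_neg]
        intro h2
        rw [h1] at h2
        exact hne h2.symm
      · exact if_neg h1
    · intro hq; exact absurd (Finset.mem_univ _) hq
  have hPhib : ∀ (b : V → A) (v : V),
      Φ b (Quotient.mk (Relation.EqvGen.setoid (edgeRel head tail ok)) v)
        = ∑ u : V, if Reach head tail ok u v then b u else 0 := by
    intro b v
    rw [hΦ_apply]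
    exact Finset.sum_congr rfl fun u _ => if_congr (hiff u v) rfl rfl
  have hker : ∀ b : V → A, Φ b = 0 ↔ Compatible head tail ok b := by
    intro b
    constructor
    · intro h v
      rw [← hPhib b v, h]
      rfl
    · intro h
      funext q
      obtain ⟨v, rfl⟩ := Quotient.exists_rep q
      show Φ b (Quotient.mk _ v) = 0
      rw [hPhib b v]
      exact h v
  have h1 : Nat.card (V → A) = Nat.card ((V → A) ⧸ Φ.ker) * Nat.card Φ.ker :=
    AddSubgroup.card_eq_card_quotient_mul_card_addSubgroup _
  have h2 : Nat.card ((V → A) ⧸ Φ.ker) = Nat.card (Q → A) :=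
    Nat.card_congr (QuotientAddGroup.quotientKerEquivOfSurjective Φ hsurj).toEquiv
  have h3 : Nat.card Φ.ker = Nat.card {b : V → A // Compatible head tail ok b} :=
    Nat.card_congr (Equiv.subtypeEquivRight fun b => (AddMonoidHom.mem_ker).trans (hker b))
  have h4 : Nat.card (V → A) = Fintype.card A ^ Fintype.card V := by
    rw [Nat.card_fun, Nat.card_eq_fintype_card, Nat.card_eq_fintype_card]
  have h5 : Nat.card (Q → A) = Fintype.card A ^ ncomp head tail ok := by
    rw [Nat.card_fun, Nat.card_eq_fintype_card]
    rfl
  rw [← h3, ← h5, mul_comm, ← h2, ← h1, h4]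

lemma card_fiber [Fintype A] (head tail : E → V) (ok : E → Prop) (b : V → A) :
    Nat.card {g : {e : E // ok e} → A // bdrySub head tail ok g = b}
      = if Compatible head tail ok b
        then Fintype.card A ^
          (Fintype.card {e : E // ok e} + ncomp head tail ok - Fintype.card V)
        else 0 := by
  classical
  by_cases hc : Compatible head tail ok b
  · rw [if_pos hc]
    obtain ⟨g₀, hg₀⟩ := AddMonoidHom.mem_range.1 (mem_range_of_compat head tail ok hc)
    -- fiber ≃ kernel
    have e1 : {g : {e : E // ok e} → A // bdrySub head tail ok g = b}
        ≃ (Dmap (A := A) head tail ok).ker :=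
      { toFun := fun g => ⟨g.1 - g₀, by
          rw [AddMonoidHom.mem_ker, map_sub, hg₀, Dmap_apply, g.2, sub_self]⟩
        invFun := fun g => ⟨g.1 + g₀, by
          have hmem := g.2
          rw [AddMonoidHom.mem_ker] at hmem
          have : Dmap (A := A) head tail ok (g.1 + g₀) = b := by
            rw [map_add, hmem, hg₀, zero_add]
          rw [← Dmap_apply, this]⟩
        left_inv := fun g => by
          apply Subtype.ext
          simp
        right_inv := fun g => by
          apply Subtype.ext
          simp }
    rw [Nat.card_congr e1]
    -- now count the kernel
    set N := Nat.card (Dmap (A := A) head tail ok).ker with hN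
    set K := Nat.card {b : V → A // Compatible head tail ok b} with hK
    set q := Fintype.card A with hq
    set n := Fintype.card {e : E // ok e} with hn
    set c := ncomp head tail ok with hc'
    have hrange : Nat.card (Dmap (A := A) head tail ok).range = K := by
      refine Nat.card_congr (Equiv.subtypeEquivRight fun x => ?_)
      constructor
      · intro hx
        obtain ⟨g, rfl⟩ := AddMonoidHom.mem_range.1 hx
        exact compat_of_bdrySub head tail ok g
      · intro hx
        exact mem_range_of_compat head tail ok hx
    have hKN : K * N = q ^ n := by
      have ha : Nat.card ({e : E // ok e} → A)
          = Nat.card (({e : E // ok e} → A) ⧸ (Dmap (A := A) head tail ok).ker) * N :=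
        AddSubgroup.card_eq_card_quotient_mul_card_addSubgroup _
      have hb' : Nat.card (({e : E // ok e} → A) ⧸ (Dmap (A := A) head tail ok).ker)
          = K := by
        rw [← hrange]
        exact Nat.card_congr (QuotientAddGroup.quotientKerEquivRange _).toEquiv
      have hc'' : Nat.card ({e : E // ok e} → A) = q ^ n := by
        rw [Nat.card_fun, Nat.card_eq_fintype_card, Nat.card_eq_fintype_card]
      rw [← hc'', ha, hb']
    have hKc : K * q ^ c = q ^ Fintype.card V := card_compat_mul head tail ok
    -- arithmetic
    have hqpos : 0 < q := Fintype.card_pos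
    rcases eq_or_lt_of_le (Nat.one_le_iff_ne_zero.2 hqpos.ne') with hq1 | hq2
    · -- q = 1
      have hq1' : q = 1 := hq1.symm
      have : K * N = 1 := by rw [hKN, hq1', one_pow]
      have hN1 : N = 1 := Nat.eq_one_of_mul_eq_one_left this
      rw [hN1, hq1', one_pow]
    · -- q ≥ 2
      have hNpos : 0 < N := Nat.card_pos
      have hmain : N * q ^ Fintype.card V = q ^ (n + c) := by
        rw [← hKc, pow_add, ← hKN]
        ring
      have hle : Fintype.card V ≤ n + c := by
        have h1 : q ^ Fintype.card V ≤ q ^ (n + c) := by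
          calc q ^ Fintype.card V ≤ N * q ^ Fintype.card V :=
                Nat.le_mul_of_pos_left _ hNpos
            _ = q ^ (n + c) := hmain
        exact (Nat.pow_le_pow_iff_right hq2).1 h1
      have hsplit : q ^ (n + c) = q ^ (n + c - Fintype.card V) * q ^ Fintype.card V := by
        rw [← pow_add, Nat.sub_add_cancel hle]
      refine Nat.eq_of_mul_eq_mul_right (pow_pos hqpos (Fintype.card V)) ?_
      rw [hmain, hsplit]
  · rw [if_neg hc]
    haveI : IsEmpty {g : {e : E // ok e} → A // bdrySub head tail ok g = b} := by
      refine ⟨fun g => hc ?_⟩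
      rw [← g.2]
      exact compat_of_bdrySub head tail ok g.1
    exact Nat.card_of_isEmpty

lemma bdry_restrict (head tail : E → V) (S : Finset E) (f : E → A)
    (hf : ∀ e ∈ S, f e = 0) :
    bdry head tail f = bdrySub head tail (fun e => e ∉ S) (fun e => f e.1) := by
  classical
  funext v
  rw [bdry, bdrySub]
  rw [← Finset.sum_filter_add_sum_filter_not Finset.univ (fun e => e ∉ S)]
  have h2 : ∑ e ∈ Finset.univ.filter (fun e => ¬ e ∉ S),
      ((if head e = v then f e else 0) - (if tail e = v then f e else 0)) = 0 := by
    refine Finset.sum_eq_zero fun e he => ?_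
    rw [Finset.mem_filter] at he
    have hf0 : f e = 0 := hf e (not_not.mp he.2)
    simp [hf0]
  rw [h2, add_zero]
  exact Finset.sum_subtype (Finset.univ.filter (fun e => e ∉ S))
    (fun x => by simp) (fun e => (if head e = v then f e else 0) - (if tail e = v then f e else 0))

noncomputable def extendEquiv (head tail : E → V) (S : Finset E) (b : V → A) :
    {f : E → A // bdry head tail f = b ∧ ∀ e ∈ S, f e = 0}
      ≃ {g : {e : E // e ∉ S} → A // bdrySub head tail (fun e => e ∉ S) g = b} where
  toFun f := ⟨fun e => f.1 e.1, by
    rw [← bdry_restrict head tail S f.1 f.2.2]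
    exact f.2.1⟩
  invFun g := ⟨fun e => if h : e ∉ S then g.1 ⟨e, h⟩ else 0, by
    have h0 : ∀ e ∈ S, (if h : e ∉ S then g.1 ⟨e, h⟩ else 0) = 0 :=
      fun e he => dif_neg (not_not.mpr he)
    refine ⟨?_, h0⟩
    have hF : (fun e : {e : E // e ∉ S} => if h : e.1 ∉ S then g.1 ⟨e.1, h⟩ else 0) = g.1 := by
      funext e
      rw [dif_pos e.2]
    rw [bdry_restrict head tail S _ h0, hF]
    exact g.2⟩
  left_inv f := by
    apply Subtype.ext
    funext e
    show (if h : e ∉ S then f.1 e else 0) = f.1 e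
    by_cases h : e ∈ S
    · rw [dif_neg (not_not.mpr h)]
      exact (f.2.2 e h).symm
    · exact dif_pos h
  right_inv g := by
    apply Subtype.ext
    funext e
    show (if h : e.1 ∉ S then g.1 ⟨e.1, h⟩ else 0) = g.1 e
    rw [dif_pos e.2]

lemma incl_excl [Fintype A] (head tail : E → V) (b : V → A) :
    (Nat.card {f : E → A // bdry head tail f = b ∧ ∀ e, f e ≠ 0} : ℤ)
      = ∑ S : Finset E, (-1 : ℤ) ^ S.card *
          (Nat.card {f : E → A // bdry head tail f = b ∧ ∀ e ∈ S, f e = 0} : ℤ) := by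
  classical
  have hcard : ∀ p : (E → A) → Prop, (Nat.card {f : E → A // p f} : ℤ)
      = ∑ f : E → A, (if p f then (1 : ℤ) else 0) := by
    intro p
    rw [Nat.card_eq_fintype_card, Fintype.card_subtype, Finset.sum_boole]
  have hstep : ∀ S : Finset E, (-1 : ℤ) ^ S.card *
      (Nat.card {f : E → A // bdry head tail f = b ∧ ∀ e ∈ S, f e = 0} : ℤ)
      = ∑ f : E → A, (if bdry head tail f = b ∧ ∀ e ∈ S, f e = 0
          then (-1 : ℤ) ^ S.card else 0) := by
    intro S
    rw [hcard, Finset.mul_sum]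
    exact Finset.sum_congr rfl fun f _ => by
      by_cases hcond : bdry head tail f = b ∧ ∀ e ∈ S, f e = 0 <;> simp [hcond]
  rw [Finset.sum_congr rfl fun S _ => hstep S, Finset.sum_comm, hcard]
  refine Finset.sum_congr rfl fun f _ => ?_
  by_cases hbf : bdry head tail f = b
  · have hZ : ∀ S : Finset E, (bdry head tail f = b ∧ ∀ e ∈ S, f e = 0)
        ↔ S ⊆ Finset.univ.filter (fun e => f e = 0) := by
      intro S
      constructor
      · intro h e he
        rw [Finset.mem_filter]
        exact ⟨Finset.mem_univ e, h.2 e he⟩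
      · intro h
        refine ⟨hbf, fun e he => ?_⟩
        have := h he
        rw [Finset.mem_filter] at this
        exact this.2
    have hcalc : (∑ S : Finset E, (if bdry head tail f = b ∧ ∀ e ∈ S, f e = 0
        then (-1 : ℤ) ^ S.card else 0))
        = if bdry head tail f = b ∧ ∀ e, f e ≠ 0 then 1 else 0 := by
      calc ∑ S : Finset E, (if bdry head tail f = b ∧ ∀ e ∈ S, f e = 0
            then (-1 : ℤ) ^ S.card else 0)
          = ∑ S : Finset E, (if S ⊆ Finset.univ.filter (fun e => f e = 0)
            then (-1 : ℤ) ^ S.card else 0) :=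
          Finset.sum_congr rfl fun S _ => by
            by_cases hS : S ⊆ Finset.univ.filter (fun e => f e = 0)
            · rw [if_pos ((hZ S).mpr hS), if_pos hS]
            · rw [if_neg (fun hc => hS ((hZ S).mp hc)), if_neg hS]
      _ = ∑ S ∈ Finset.univ.filter
            (fun S : Finset E => S ⊆ Finset.univ.filter (fun e => f e = 0)),
            (-1 : ℤ) ^ S.card := (Finset.sum_filter _ _).symm
      _ = ∑ S ∈ (Finset.univ.filter (fun e => f e = 0)).powerset, (-1 : ℤ) ^ S.card := by
          refine Finset.sum_congr ?_ fun _ _ => rfl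
          ext T
          simp [Finset.mem_powerset]
      _ = if Finset.univ.filter (fun e => f e = 0) = ∅ then 1 else 0 :=
          Finset.sum_powerset_neg_one_pow_card
      _ = if bdry head tail f = b ∧ ∀ e, f e ≠ 0 then 1 else 0 := by
          by_cases hnz : ∀ e : E, f e ≠ 0
          · have h1 : Finset.univ.filter (fun e => f e = 0) = ∅ := by
              rw [Finset.filter_eq_empty_iff]
              intro e _
              exact hnz e
            rw [if_pos h1, if_pos ⟨hbf, hnz⟩]
          · have h1 : ¬ (Finset.univ.filter (fun e => f e = 0) = ∅) := by
              intro hemp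
              rw [Finset.filter_eq_empty_iff] at hemp
              exact hnz fun e => hemp (Finset.mem_univ e)
            rw [if_neg h1, if_neg (fun h => hnz h.2)]
    convert hcalc.symm using 2
  · rw [if_neg (fun h => hbf h.1)]
    refine (Finset.sum_eq_zero fun S _ => ?_).symm
    exact if_neg (fun h => hbf h.1)

end FlowAux


/-- counting formula for nowhere-zero `(A,b)`-flows over `b`-compatible
spanning subgraphs. -/
theorem stmt4 {V E A : Type*} [Fintype V] [Fintype E] [AddCommGroup A] [Fintype A]
    (head tail : E → V) (b : V → A)
    (hb : Compatible head tail (fun _ => True) b) :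
    (Nat.card {f : E → A // bdry head tail f = b ∧ ∀ e, f e ≠ 0} : ℤ) =
      ∑ S ∈ Finset.univ.filter (fun S : Finset E => Compatible head tail (fun e => e ∉ S) b),
        (-1 : ℤ) ^ S.card * (Fintype.card A : ℤ) ^ (cycRank head tail S) := by
    classical
  rw [incl_excl head tail b]
  have hstep : ∀ S : Finset E,
      (Nat.card {f : E → A // bdry head tail f = b ∧ ∀ e ∈ S, f e = 0} : ℤ)
        = if Compatible head tail (fun e => e ∉ S) b
          then (Fintype.card A : ℤ) ^ cycRank head tail S else 0 := by
    intro S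
    rw [Nat.card_congr (extendEquiv head tail S b), card_fiber]
    simp only [cycRank]
    split_ifs with hcomp
    · push_cast
      congr 1
      rw [Fintype.card_subtype]
      have hco : ∀ (inst : DecidablePred (fun e : E => e ∉ S)),
          (@Finset.filter E (fun e => e ∉ S) inst Finset.univ).card
            = Fintype.card E - S.card := by
        intro inst
        have hflt : (@Finset.filter E (fun e => e ∉ S) inst Finset.univ)
            = Finset.univ \ S := by
          ext e
          simp [Finset.mem_filter, Finset.mem_sdiff]
        rw [hflt, Finset.card_univ_diff]
      rw [hco]
      try omega
    · simp
  rw [Finset.sum_congr rfl fun S _ => by rw [hstep S]]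
  rw [Finset.sum_filter]
  refine Finset.sum_congr rfl fun S _ => ?_
  rw [mul_ite, mul_zero]
end

section
/- Let G be a finite multigraph, A a finite abelian group, and b : V(G) → A locally zero-sum on G. Let F be a b-compatible bond of G (a bond such that G−F is b-compatible), with maximal element e_F under a fixed total order ≺ on E(G), and let B = F ∖ {e_F}. If S ⊆ E(G) contains B, e_F ∉ S, and G−S is b-compatible, then G−S−e_F is also b-compatible. -/
/-!
Let `e` be the maximal edge of `F`, with ends `h` and `t`. As `F ∖ {e} ⊆ S`, the graph `G - S - e`
is a subgraph of `G - F`, in which `h` and `t` are separated because `F` is a bond. Deleting `e`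
from `G - S` either changes no component or splits the component of `e` into the components
`C_h ∋ h` and `C_t ∋ t`. The component of `h` in `G - F` is `C_h` together with a union of
components of `G - S`: a path of `G - S` leaving the rest would have to pass through `h` or `t`.
So `b` sums to zero on `C_h`, hence also on `C_t`.
-/

open Finset

attribute [local instance] Classical.propDecidable

universe u v w

section Reach

variable {V E : Type*} {head tail : E → V}

theorem reach_equivalence (head tail : E → V) (ok : E → Prop) :
    Equivalence (Reach head tail ok) :=
  Relation.EqvGen.is_equivalence _

theorem Reach.mono {ok ok' : E → Prop} (h : ∀ x, ok x → ok' x) {u v : V}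
    (huv : Reach head tail ok u v) : Reach head tail ok' u v :=
  Relation.EqvGen.mono (fun _ _ ⟨x, hx, hends⟩ => ⟨x, h x hx, hends⟩) u v huv

theorem reach_endpoints {ok : E → Prop} {e : E} (he : ok e) :
    Reach head tail ok (head e) (tail e) :=
  Relation.EqvGen.rel _ _ ⟨e, he, Or.inl ⟨rfl, rfl⟩⟩

/-- Adding the edge `e` merges the components of its two ends and leaves the others unchanged. -/
theorem reach_iff_of_add_edge {ok ok' : E → Prop} {e : E} (hok : ∀ x, ok x ↔ ok' x ∨ x = e)
    {u v : V} :
    Reach head tail ok u v ↔ Reach head tail ok' u v ∨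
      ((Reach head tail ok' u (head e) ∨ Reach head tail ok' u (tail e)) ∧
        (Reach head tail ok' v (head e) ∨ Reach head tail ok' v (tail e))) := by
  have R' := reach_equivalence head tail ok'
  set M : V → Prop := fun x => Reach head tail ok' x (head e) ∨ Reach head tail ok' x (tail e)
  have hM : ∀ {x y}, Reach head tail ok' x y → M y → M x := fun hxy hy =>
    hy.imp (R'.trans hxy) (R'.trans hxy)
  have hQ : Equivalence fun x y => Reach head tail ok' x y ∨ (M x ∧ M y) :=
    { refl := fun x => Or.inl (R'.refl x)
      symm := fun h => h.imp R'.symm And.symm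
      trans := by
        rintro x y z (hxy | ⟨hx, hy⟩) (hyz | ⟨hy', hz⟩)
        · exact Or.inl (R'.trans hxy hyz)
        · exact Or.inr ⟨hM hxy hy', hz⟩
        · exact Or.inr ⟨hx, hM (R'.symm hyz) hy⟩
        · exact Or.inr ⟨hx, hz⟩ }
  constructor
  · refine fun huv => hQ.eqvGen_iff.mp (Relation.EqvGen.mono ?_ u v huv)
    rintro x y ⟨f, hf, hends⟩
    rcases (hok f).mp hf with hf' | rfl
    · exact Or.inl (Relation.EqvGen.rel _ _ ⟨f, hf', hends⟩)
    · refine Or.inr ⟨?_, ?_⟩ <;> rcases hends with ⟨rfl, rfl⟩ | ⟨rfl, rfl⟩ <;>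
        simp [M, R'.refl]
  · have R := reach_equivalence head tail ok
    have hmono : ∀ {x y}, Reach head tail ok' x y → Reach head tail ok x y :=
      Reach.mono fun x hx => (hok x).mpr (Or.inl hx)
    have hends : Reach head tail ok (head e) (tail e) :=
      reach_endpoints ((hok e).mpr (Or.inr rfl))
    have hmerged : ∀ {x}, M x → Reach head tail ok x (head e) := by
      rintro x (hx | hx)
      · exact hmono hx
      · exact R.trans (hmono hx) (R.symm hends)
    rintro (huv | ⟨hu, hv⟩)
    · exact hmono huv
    · exact R.trans (hmerged hu) (R.symm (hmerged hv))

theorem reach_iff_of_add_edge_of_reach {ok ok' : E → Prop} {e : E}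
    (hok : ∀ x, ok x ↔ ok' x ∨ x = e) (hends : Reach head tail ok' (head e) (tail e))
    {u v : V} :
    Reach head tail ok u v ↔ Reach head tail ok' u v := by
  have R' := reach_equivalence head tail ok'
  rw [reach_iff_of_add_edge hok]
  refine ⟨?_, Or.inl⟩
  have hmerged : ∀ {x}, (Reach head tail ok' x (head e) ∨ Reach head tail ok' x (tail e)) →
      Reach head tail ok' x (head e) :=
    fun h => h.elim id fun hx => R'.trans hx (R'.symm hends)
  rintro (huv | ⟨hu, hv⟩)
  · exact huv
  · exact R'.trans (hmerged hu) (R'.symm (hmerged hv))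

theorem ncomp_congr {ok ok' : E → Prop}
    (h : ∀ u v, Reach head tail ok u v ↔ Reach head tail ok' u v) :
    ncomp head tail ok = ncomp head tail ok' := by
  unfold ncomp
  congr 2
  exact Setoid.ext h

theorem IsBond.not_reach_endpoints {F : Finset E} (hF : IsBond head tail F) {e : E}
    (he : e ∈ F) :
    ¬ Reach head tail (· ∉ F) (head e) (tail e) := by
  intro hends
  have hok : ∀ x, x ∉ F.erase e ↔ x ∉ F ∨ x = e := fun x => by
    rw [mem_erase]; tauto
  apply hF.2.1
  rw [← hF.2.2 _ (erase_ssubset he)]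
  exact ncomp_congr fun u v => (reach_iff_of_add_edge_of_reach hok hends).symm

end Reach

section Sums

variable {V E A : Type*} [Fintype V] [AddCommGroup A] {head tail : E → V} {b : V → A}

theorem sum_ite_eq_add_of_iff_or {P Q R : V → Prop} (h : ∀ u, P u ↔ Q u ∨ R u)
    (hd : ∀ u, Q u → ¬ R u) :
    (∑ u, if P u then b u else 0) =
      (∑ u, if Q u then b u else 0) + ∑ u, if R u then b u else 0 := by
  rw [← sum_add_distrib]
  refine sum_congr rfl fun u _ => ?_
  by_cases hQ : Q u
  · simp [hQ, hd u hQ, (h u).mpr (Or.inl hQ)]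
  · simp [hQ, h]

theorem Compatible.sum_eq_zero_of_closed {ok : E → Prop} (hb : Compatible head tail ok b)
    {P : V → Prop} (hP : ∀ u v, Reach head tail ok u v → P u → P v) :
    (∑ u, if P u then b u else 0) = 0 := by
  let c : V → Quotient (Relation.EqvGen.setoid (edgeRel head tail ok)) := Quotient.mk _
  rw [← sum_filter, ← sum_fiberwise_of_maps_to (g := c) fun u hu => mem_image_of_mem c hu]
  refine sum_eq_zero fun y hy => ?_
  obtain ⟨v, hv, rfl⟩ := mem_image.mp hy
  have hfiber : ({u ∈ univ | P u} : Finset V).filter (fun u => c u = c v) =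
      univ.filter (Reach head tail ok · v) := by
    ext u
    simp only [mem_filter, mem_univ, true_and, c, Quotient.eq]
    exact ⟨And.right,
      fun huv => ⟨hP v u (Relation.EqvGen.symm _ _ huv) (mem_filter.mp hv).2, huv⟩⟩
  rw [hfiber, sum_filter]
  exact hb v

theorem Compatible.sum_reach_head_eq_zero {ok ok' okF : E → Prop} {e : E}
    (hb : Compatible head tail ok b) (hbF : Compatible head tail okF b)
    (hok : ∀ x, ok x ↔ ok' x ∨ x = e) (hsub : ∀ x, ok' x → okF x)
    (hsep : ¬ Reach head tail okF (head e) (tail e)) :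
    (∑ u, if Reach head tail ok' u (head e) then b u else 0) = 0 := by
  have RF := reach_equivalence head tail okF
  have R' := reach_equivalence head tail ok'
  have hR'F : ∀ {u v}, Reach head tail ok' u v → Reach head tail okF u v := Reach.mono hsub
  have hsplit := sum_ite_eq_add_of_iff_or (b := b) (P := (Reach head tail okF · (head e)))
    (Q := (Reach head tail ok' · (head e)))
    (R := fun u => Reach head tail okF u (head e) ∧ ¬ Reach head tail ok' u (head e))
    (fun u => ⟨fun hu => (em _).imp id (⟨hu, ·⟩), fun hu => hu.elim hR'F And.left⟩)
    (fun u hu hu' => hu'.2 hu)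
  -- As the ends of `e` are separated in `okF`, this set is a union of `ok`-components.
  have hrest := hb.sum_eq_zero_of_closed
    (P := fun u => Reach head tail okF u (head e) ∧ ¬ Reach head tail ok' u (head e)) <| by
    rintro u w huw ⟨hu, hu'⟩
    rcases (reach_iff_of_add_edge hok).mp huw with huw | ⟨hu'' | hut, -⟩
    · exact ⟨RF.trans (RF.symm (hR'F huw)) hu, fun hw => hu' (R'.trans huw hw)⟩
    · exact absurd hu'' hu'
    · exact absurd (RF.trans (RF.symm hu) (hR'F hut)) hsep
  have := hbF (head e)
  rwa [hsplit, hrest, add_zero] at this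

theorem Compatible.of_add_edge {ok ok' : E → Prop} {e : E} (hb : Compatible head tail ok b)
    (hok : ∀ x, ok x ↔ ok' x ∨ x = e)
    (hhead : (∑ u, if Reach head tail ok' u (head e) then b u else 0) = 0) :
    Compatible head tail ok' b := by
  have R' := reach_equivalence head tail ok'
  intro v
  by_cases hends : Reach head tail ok' (head e) (tail e)
  · simpa only [reach_iff_of_add_edge_of_reach hok hends] using hb v
  by_cases hvh : Reach head tail ok' v (head e)
  · have hclass : ∀ u, Reach head tail ok' u v ↔ Reach head tail ok' u (head e) :=
      fun u => ⟨fun hu => R'.trans hu hvh, fun hu => R'.trans hu (R'.symm hvh)⟩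
    simpa only [hclass] using hhead
  by_cases hvt : Reach head tail ok' v (tail e)
  · have hclass : ∀ u, Reach head tail ok u v ↔
        Reach head tail ok' u v ∨ Reach head tail ok' u (head e) := fun u => by
      have htail : ∀ x, Reach head tail ok' x (tail e) ↔ Reach head tail ok' x v :=
        fun x => ⟨fun hx => R'.trans hx (R'.symm hvt), fun hx => R'.trans hx hvt⟩
      rw [reach_iff_of_add_edge hok]
      simp only [htail, R'.refl v, or_true, and_true]
      tauto
    have hsum := hb v
    rwa [sum_ite_eq_add_of_iff_or hclass fun u huv huh => hvh (R'.trans (R'.symm huv) huh),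
      hhead, add_zero] at hsum
  · have hclass : ∀ u, Reach head tail ok u v ↔ Reach head tail ok' u v := fun u => by
      simp [reach_iff_of_add_edge hok, hvh, hvt]
    simpa only [hclass] using hb v

end Sums

theorem stmt10_general {V E A : Type*} [Fintype V] [AddCommGroup A]
    (head tail : E → V) (lo : LinearOrder E) (b : V → A)
    (F : Finset E) (hF : IsCBond head tail b F) (hne : F.Nonempty)
    (S : Finset E) (hBS : F.erase (@Finset.max' E lo F hne) ⊆ S)
    (heS : @Finset.max' E lo F hne ∉ S)
    (hS : Compatible head tail (fun e => e ∉ S) b) :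
    Compatible head tail (fun e => e ∉ insert (@Finset.max' E lo F hne) S) b := by
  set eF := @Finset.max' E lo F hne
  have hok : ∀ x, x ∉ S ↔ x ∉ insert eF S ∨ x = eF := fun x => by
    by_cases hx : x = eF
    · simp [hx, heS]
    · simp [hx]
  have hsub : ∀ x, x ∉ insert eF S → x ∉ F := fun x hx hxF =>
    hx (mem_insert.mpr ((em (x = eF)).imp_right fun hne' => hBS (mem_erase.mpr ⟨hne', hxF⟩)))
  have hsep := hF.1.not_reach_endpoints (@Finset.max'_mem E lo F hne)
  exact hS.of_add_edge hok (hS.sum_reach_head_eq_zero hF.2 hok hsub hsep)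

/-- adding back the maximal edge of a `b`-compatible bond whose broken bond
lies in `S` preserves `b`-compatibility after deletion. -/
theorem stmt10 {V E A : Type*} [Fintype V] [Fintype E] [AddCommGroup A]
    (head tail : E → V) (lo : LinearOrder E) (b : V → A)
    (hb : Compatible head tail (fun _ => True) b)
    (F : Finset E) (hF : IsCBond head tail b F) (hne : F.Nonempty)
    (S : Finset E) (hBS : F.erase (@Finset.max' E lo F hne) ⊆ S)
    (heS : @Finset.max' E lo F hne ∉ S)
    (hS : Compatible head tail (fun e => e ∉ S) b) :
    Compatible head tail (fun e => e ∉ insert (@Finset.max' E lo F hne) S) b :=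
  stmt10_general head tail lo b F hF hne S hBS heS hS
end
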